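/- If a cooperative game (N, v) is convex (supermodular), i.e., v(S ∪ T) + v(S ∩ T) ≥ v(S) + v(T) for all coalitions S, T ⊆ N, then the marginal-contribution vector associated to any ordering of the players lies in the core: fixing an ordering i_1,...,i_n of N and setting x_{i_k} = v({i_1,...,i_k}) − v({i_1,...,i_{k−1}}), the allocation x satisfies ∑_{i∈N} x_i = v(N) and ∑_{i∈S} x_i ≥ v(S) for all S ⊆ N. -/

import Mathlib

/-- The coalition of the first `k` players in the ordering `σ`. -/
noncomputable def prefixCoalition {N : Type*} [Fintype N] [DecidableEq N] {n : ℕ}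
    (σ : Fin n ≃ N) (k : ℕ) : Finset N :=
  (Finset.univ.filter (fun j : Fin n => (j : ℕ) < k)).image σ

/-- The marginal-contribution allocation associated with the ordering `σ`. -/
noncomputable def marginalVector {N : Type*} [Fintype N] [DecidableEq N] {n : ℕ}
    (v : Finset N → ℝ) (σ : Fin n ≃ N) (i : N) : ℝ :=
  v (prefixCoalition σ ((σ.symm i : ℕ) + 1)) - v (prefixCoalition σ (σ.symm i))

/-!
Supermodularity says that the marginal contribution `v (insert i A) - v A` of a player `i`
grows with the coalition `A` it joins. The members of `S` preceding `i` in the ordering form a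
subcoalition of the full prefix preceding `i`, so the marginal contribution of `i` to them is at
most its payoff `x i`; summed over `i ∈ S` these contributions telescope to `v S - v ∅`.
Telescoping over all players gives efficiency.
-/
theorem marginal_le_marginal_of_supermodular {α : Type*} [DecidableEq α] {v : Finset α → ℝ}
    (hconvex : ∀ S T : Finset α, v S + v T ≤ v (S ∪ T) + v (S ∩ T))
    {A B : Finset α} (hAB : A ⊆ B) {i : α} (hi : i ∉ B) :
    v (insert i A) - v A ≤ v (insert i B) - v B := by
  have hunion : insert i A ∪ B = insert i B := by
    rw [Finset.insert_union, Finset.union_eq_right.mpr hAB]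
  have hinter : insert i A ∩ B = A := by
    rw [Finset.insert_inter_of_notMem hi, Finset.inter_eq_left.mpr hAB]
  have := hconvex (insert i A) B
  rw [hunion, hinter] at this
  linarith

namespace prefixCoalition

variable {N : Type*} [Fintype N] [DecidableEq N] {n : ℕ} (σ : Fin n ≃ N)

theorem mem_iff {k : ℕ} {i : N} : i ∈ prefixCoalition σ k ↔ (σ.symm i : ℕ) < k := by
  simp only [prefixCoalition, Finset.mem_image, Finset.mem_filter, Finset.mem_univ, true_and,
    ← Equiv.eq_symm_apply, exists_eq_right]

@[simp]
theorem zero : prefixCoalition σ 0 = ∅ := by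
  ext i
  simp [mem_iff]

@[simp]
theorem self : prefixCoalition σ n = Finset.univ := by
  ext i
  simp [mem_iff]

theorem succ (k : Fin n) : prefixCoalition σ (k + 1) = insert (σ k) (prefixCoalition σ k) := by
  ext i
  simp only [Finset.mem_insert, mem_iff, ← Equiv.symm_apply_eq, Fin.ext_iff]
  omega

theorem apply_notMem (k : Fin n) : σ k ∉ prefixCoalition σ k := by
  simp [mem_iff]

end prefixCoalition

namespace marginalVector

variable {N : Type*} [Fintype N] [DecidableEq N] {n : ℕ} (v : Finset N → ℝ) (σ : Fin n ≃ N)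

theorem apply_apply (k : Fin n) :
    marginalVector v σ (σ k) = v (prefixCoalition σ (k + 1)) - v (prefixCoalition σ k) := by
  simp [marginalVector]

theorem sum_eq : ∑ i, marginalVector v σ i = v Finset.univ - v ∅ := by
  rw [← σ.sum_comp]
  simp only [apply_apply]
  rw [Fin.sum_univ_eq_sum_range
      (fun k => v (prefixCoalition σ (k + 1)) - v (prefixCoalition σ k)),
    Finset.sum_range_sub (fun k => v (prefixCoalition σ k)), prefixCoalition.zero,
    prefixCoalition.self]

theorem sub_le_sum_inter_prefixCoalition
    (hconvex : ∀ S T : Finset N, v S + v T ≤ v (S ∪ T) + v (S ∩ T)) (S : Finset N) :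
    ∀ k ≤ n, v (S ∩ prefixCoalition σ k) - v ∅ ≤
      ∑ i ∈ S ∩ prefixCoalition σ k, marginalVector v σ i := by
  intro k hk
  induction k with
  | zero => simp
  | succ k ih =>
    obtain ⟨j, rfl⟩ : ∃ j : Fin n, (j : ℕ) = k := ⟨⟨k, hk⟩, rfl⟩
    have hj : σ j ∉ S ∩ prefixCoalition σ j :=
      mt Finset.mem_of_mem_inter_right (prefixCoalition.apply_notMem σ j)
    rw [prefixCoalition.succ σ j]
    by_cases hjS : σ j ∈ S
    · rw [Finset.inter_insert_of_mem hjS, Finset.sum_insert hj, apply_apply,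
        prefixCoalition.succ σ j]
      have := marginal_le_marginal_of_supermodular hconvex (Finset.inter_subset_right (s₁ := S))
        (prefixCoalition.apply_notMem σ j)
      linarith [ih (by omega)]
    · rw [Finset.inter_insert_of_notMem hjS]
      exact ih (by omega)

end marginalVector

/-- For a convex (supermodular) cooperative game, the marginal-contribution vector
of any ordering of the players lies in the core. -/
theorem marginal_vector_in_core_of_convex {N : Type*} [Fintype N] [DecidableEq N]
    {n : ℕ} (v : Finset N → ℝ) (hv : v ∅ = 0)
    (hconvex : ∀ S T : Finset N, v S + v T ≤ v (S ∪ T) + v (S ∩ T))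
    (σ : Fin n ≃ N) :
    (∑ i, marginalVector v σ i = v Finset.univ) ∧
      ∀ S : Finset N, v S ≤ ∑ i ∈ S, marginalVector v σ i := by
  refine ⟨by rw [marginalVector.sum_eq, hv, sub_zero], fun S => ?_⟩
  have := marginalVector.sub_le_sum_inter_prefixCoalition v σ hconvex S n le_rfl
  rwa [prefixCoalition.self, Finset.inter_univ, hv, sub_zero] at this
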